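/- For every integer n ≥ 1 and every integer i with 1 ≤ i ≤ n, there is no (x,y) ∈ [0,1)² such that simultaneously Λ_n(x,y) = (0,0,i+1) and Λ_n(y,x) = (1,1,2). (This shows the antigreen tiles do not occur as TILE_n(x,y).) -/

import Mathlib

open scoped BigOperators

namespace MetallicMean

/-- A 3-dimensional integer vector. -/
abbrev Vec3 := ℤ × ℤ × ℤ

/-- A Wang tile is a quadruple (right, top, left, bottom) of labels. -/
abbrev Tile := Vec3 × Vec3 × Vec3 × Vec3

def right (τ : Tile) : Vec3 := τ.1
def top (τ : Tile) : Vec3 := τ.2.1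
def left (τ : Tile) : Vec3 := τ.2.2.1
def bottom (τ : Tile) : Vec3 := τ.2.2.2

/-- Reflection of a tile by the positive diagonal: (r,t,ℓ,b) ↦ (t,r,b,ℓ). -/
def reflect (τ : Tile) : Tile := (top τ, right τ, bottom τ, left τ)

/-- The set V_n of admissible labels. -/
def Vset (n : ℤ) : Set Vec3 :=
  {v | 0 ≤ v.1 ∧ v.1 ≤ v.2.1 ∧ v.2.1 ≤ v.2.2 ∧ v.2.2 ≤ n + 1 ∧ v.2.1 ≤ 1}

/-- The function θ_n. -/
def theta (n : ℤ) (u v : Vec3) : Vec3 :=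
  (u.1,
   if u.1 = 0 then v.2.2 - n else 1,
   if v.1 = 0 then v.2.1 + u.1 else u.2.2 + 1)

/-- The set 𝒞_n of instances of the θ_n-chip. -/
def Cset (n : ℤ) : Set Tile :=
  {τ | ∃ u v : Vec3, u ∈ Vset n ∧ v ∈ Vset n ∧
      theta n u v ∈ Vset n ∧ theta n v u ∈ Vset n ∧
      τ = (theta n u v, theta n v u, u, v)}

/-- The n-th metallic mean β, the positive root of x² - nx - 1. -/
noncomputable def beta (n : ℤ) : ℝ := ((n : ℝ) + Real.sqrt ((n : ℝ) ^ 2 + 4)) / 2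

/-- The conjugate root β* = n - β = -β⁻¹. -/
noncomputable def betaStar (n : ℤ) : ℝ := (n : ℝ) - beta n

/-- The coding map Λ_n. -/
noncomputable def Lam (n : ℤ) (x y : ℝ) : Vec3 :=
  (⌊y + betaStar n + 1⌋,
   ⌊(beta n)⁻¹ * x + y + betaStar n + 1⌋,
   ⌊beta n * x + y + betaStar n + 1⌋)

/-- The Wang tile TILE_n(x, y), written as (right, top, left, bottom). -/
noncomputable def TileAt (n : ℤ) (x y : ℝ) : Tile :=
  (Lam n (Int.fract x) (Int.fract y),
   Lam n (Int.fract y) (Int.fract x),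
   Lam n (Int.fract (x + betaStar n)) (Int.fract y),
   Lam n (Int.fract (y + betaStar n)) (Int.fract x))

/-- The metallic mean Wang tile set 𝒯_n = {TILE_n(x,y) : (x,y) ∈ [0,1]²}. -/
def Tset (n : ℤ) : Set Tile :=
  {τ | ∃ x y : ℝ, x ∈ Set.Icc (0 : ℝ) 1 ∧ y ∈ Set.Icc (0 : ℝ) 1 ∧ τ = TileAt n x y}

/-- A configuration assigns a tile to every position of ℤ². -/
abbrev Config := ℤ × ℤ → Tile

/-- A configuration is valid w.r.t. a set `S` of Wang tiles if all its tiles are in `S`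
and contiguous edges of adjacent tiles match. -/
def IsValid (S : Set Tile) (w : Config) : Prop :=
  (∀ p : ℤ × ℤ, w p ∈ S) ∧
  ∀ p : ℤ × ℤ,
    right (w p) = left (w (p + (1, 0))) ∧
    top (w p) = bottom (w (p + (0, 1)))

/-- The Wang shift Ω_S of all valid configurations over `S`. -/
def OmegaOf (S : Set Tile) : Set Config := {w | IsValid S w}

/-- The shift ℤ²-action on configurations: (σ^k w)(p) = w(p + k). -/
def shift (k : ℤ × ℤ) (w : Config) : Config := fun p => w (p + k)

end MetallicMean

namespace MetallicMean

/-
Since β* = -β⁻¹, the condition (Λ_n(x,y))₂ = 0 says β⁻¹x + y < β⁻¹, i.e. x + βy < 1, while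
(Λ_n(y,x))₃ = 2 says βy + x ≥ 1 + β⁻¹ > 1.
-/

theorem beta_pos (n : ℤ) : 0 < beta n := by
  have : |(n : ℝ)| < √((n : ℝ) ^ 2 + 4) := by
    rw [← Real.sqrt_sq_eq_abs]
    exact Real.sqrt_lt_sqrt (sq_nonneg _) (by linarith)
  unfold beta
  linarith [neg_abs_le (n : ℝ)]

theorem beta_mul_betaStar (n : ℤ) : beta n * betaStar n = -1 := by
  have : √((n : ℝ) ^ 2 + 4) ^ 2 = (n : ℝ) ^ 2 + 4 := Real.sq_sqrt (by positivity)
  unfold betaStar beta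
  linear_combination -this / 4

theorem betaStar_eq_neg_inv (n : ℤ) : betaStar n = -(beta n)⁻¹ := by
  rw [eq_neg_iff_add_eq_zero, ← mul_right_inj' (beta_pos n).ne', mul_add,
    beta_mul_betaStar, mul_inv_cancel₀ (beta_pos n).ne']
  ring

theorem lam_snd_lt_one_iff (n : ℤ) (x y : ℝ) :
    (Lam n x y).2.1 < 1 ↔ x + beta n * y < 1 := by
  have hβ := beta_pos n
  rw [Lam, Int.floor_lt, betaStar_eq_neg_inv, Int.cast_one, ← mul_lt_mul_iff_right₀ hβ]
  field_simp
  constructor <;> intro h <;> linarith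

theorem two_le_lam_thd_iff (n : ℤ) (x y : ℝ) :
    2 ≤ (Lam n x y).2.2 ↔ 1 + (beta n)⁻¹ ≤ beta n * x + y := by
  rw [Lam, Int.le_floor, betaStar_eq_neg_inv]
  constructor <;> intro h <;> push_cast at * <;> linarith

theorem statement13_general (n : ℤ) (i : ℤ) :
    ¬ ∃ x y : ℝ, x ∈ Set.Ico (0 : ℝ) 1 ∧ y ∈ Set.Ico (0 : ℝ) 1 ∧
      Lam n x y = ((0, 0, i + 1) : Vec3) ∧ Lam n y x = ((1, 1, 2) : Vec3) := by
  rintro ⟨x, y, -, -, hxy, hyx⟩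
  have hlt : x + beta n * y < 1 := (lam_snd_lt_one_iff n x y).mp (by simp [hxy])
  have hge : 1 + (beta n)⁻¹ ≤ beta n * y + x := (two_le_lam_thd_iff n y x).mp (by simp [hyx])
  linarith [inv_pos.mpr (beta_pos n)]

/-- For every integer 1 ≤ i ≤ n, there is no (x,y) ∈ [0,1)² with
Λ_n(x,y) = (0,0,i+1) and Λ_n(y,x) = (1,1,2) (the antigreen tiles do not occur). -/
theorem statement13 (n : ℤ) (hn : 1 ≤ n) (i : ℤ) (hi1 : 1 ≤ i) (hi2 : i ≤ n) :
    ¬ ∃ x y : ℝ, x ∈ Set.Ico (0 : ℝ) 1 ∧ y ∈ Set.Ico (0 : ℝ) 1 ∧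
      Lam n x y = ((0, 0, i + 1) : Vec3) ∧ Lam n y x = ((1, 1, 2) : Vec3) :=
  statement13_general n i

end MetallicMean
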